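/- arXiv:1210.4314 — 2 statements merged into one kernel-verified Lean document; each statement's English description precedes it below -/
import Mathlib

section
/- Let d : 𝒞 → ℕ̄ be a dimension theory, and let (A_i, φ_{i,j})_{i ∈ I} be an inductive system of C*-algebras over a directed index set I with each A_i ∈ 𝒞 and such that the inductive limit A := lim→ A_i also lies in 𝒞. Then d(A) ≤ liminf_i d(A_i), where liminf_i d(A_i) := inf{ sup_{i ∈ J} d(A_i) : J ⊂ I cofinal }. -/
noncomputable section

open scoped Topology

universe u v w

/-! ### Covering dimension, local dimension, almost Hausdorff spaces -/

/-- `HasCovDimLE X n` : every finite open cover of `X` has a finite open refinement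
of order at most `n + 1`, i.e. the covering dimension of `X` is at most `n`. -/
def HasCovDimLE (X : Type*) [TopologicalSpace X] (n : ℕ) : Prop :=
  ∀ U : Set (Set X), U.Finite → (∀ u ∈ U, IsOpen u) → ⋃₀ U = Set.univ →
    ∃ V : Set (Set X), V.Finite ∧ (∀ v ∈ V, IsOpen v) ∧ ⋃₀ V = Set.univ ∧
      (∀ v ∈ V, ∃ u ∈ U, v ⊆ u) ∧ ∀ x : X, Set.ncard {v ∈ V | x ∈ v} ≤ n + 1

/-- The covering dimension of a topological space, valued in `ℕ∞`. -/
def covDim (X : Type*) [TopologicalSpace X] : ℕ∞ :=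
  sInf {m : ℕ∞ | ∃ n : ℕ, m = (n : ℕ∞) ∧ HasCovDimLE X n}

/-- `HasLocDimLE X n` : every point has a closed neighborhood of covering dimension `≤ n`. -/
def HasLocDimLE (X : Type*) [TopologicalSpace X] (n : ℕ) : Prop :=
  ∀ x : X, ∃ F : Set X, F ∈ 𝓝 x ∧ IsClosed F ∧ HasCovDimLE F n

/-- The local covering dimension of a topological space, valued in `ℕ∞`. -/
def locDim (X : Type*) [TopologicalSpace X] : ℕ∞ :=
  sInf {m : ℕ∞ | ∃ n : ℕ, m = (n : ℕ∞) ∧ HasLocDimLE X n}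

/-- A space is almost Hausdorff if every non-empty closed subset contains a non-empty
relatively open subset which is Hausdorff. -/
def AlmostHausdorff (X : Type*) [TopologicalSpace X] : Prop :=
  ∀ F : Set X, IsClosed F → F.Nonempty →
    ∃ G : Set X, IsOpen G ∧ (F ∩ G).Nonempty ∧ T2Space ↥(F ∩ G)

/-- Map `ℕ∞ → ℕ∞` by a function on `ℕ`, sending `∞` to `∞` (used for floor operations like
`d ↦ ⌊d/2⌋` with the convention `⌊∞/2⌋ = ∞`). -/
def enatMap (f : ℕ → ℕ) (m : ℕ∞) : ℕ∞ :=
  sInf {k : ℕ∞ | ∃ n : ℕ, m = (n : ℕ∞) ∧ k = (f n : ℕ∞)}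

/-! ### Sub-C*-algebras, ideals, hereditary and full subalgebras, approximation -/

section Subalgebras

variable {A : Type u} [NonUnitalCStarAlgebra A]

/-- `IsIdealIn J D` : `J` is a two-sided ideal in the subalgebra `D` (both regarded as
subalgebras of an ambient C*-algebra). Closed two-sided ideals of a C*-algebra are
automatically star-closed, so representing ideals as star subalgebras is no loss. -/
def IsIdealIn (J D : NonUnitalStarSubalgebra ℂ A) : Prop :=
  J ≤ D ∧ ∀ a ∈ D, ∀ x ∈ J, a * x ∈ J ∧ x * a ∈ J

/-- `IsHereditaryIn B D` : `B` is a hereditary subalgebra of the subalgebra `D`: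
whenever `a ∈ D`, `b ∈ B` and `0 ≤ a ≤ b`, then `a ∈ B`. -/
def IsHereditaryIn [PartialOrder A] [StarOrderedRing A]
    (B D : NonUnitalStarSubalgebra ℂ A) : Prop :=
  B ≤ D ∧ ∀ a ∈ D, ∀ b ∈ B, 0 ≤ a → a ≤ b → a ∈ B

/-- `IsFullIn B D` : `B` is a full subalgebra of the subalgebra `D`, i.e. `B` is contained
in no proper closed two-sided ideal of `D`. -/
def IsFullIn (B D : NonUnitalStarSubalgebra ℂ A) : Prop :=
  B ≤ D ∧ ∀ J : NonUnitalStarSubalgebra ℂ A,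
    IsClosed (J : Set A) → IsIdealIn J D → B ≤ J → D ≤ J

/-- A family of subalgebras approximates `A` if every finite subset of `A` is within `ε`
of one of the subalgebras, for every `ε > 0`. -/
def ApproximatedBy {ι : Sort v} (S : ι → NonUnitalStarSubalgebra ℂ A) : Prop :=
  ∀ F : Finset A, ∀ ε : ℝ, 0 < ε → ∃ i, ∀ x ∈ F, ∃ y ∈ S i, ‖x - y‖ < ε

/-- `ProperlyIncluded s t` : positive contractions of `s` form an approximate unit for `t`;
this is the meaning of "the inclusion `s ⊆ t` is proper". Positivity of `c` is expressed as
`c = star b * b`. -/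
def ProperlyIncluded (s t : Set A) : Prop :=
  s ⊆ t ∧ ∀ x ∈ t, ∀ ε : ℝ, 0 < ε →
    ∃ c ∈ s, (∃ b : A, c = star b * b) ∧ ‖c‖ ≤ 1 ∧ ‖c * x * c - x‖ < ε

end Subalgebras

/-- A bundled (non-unital) C*-algebra, used to quantify existentially over C*-algebras. -/
structure CStarAlgebraBundle : Type (u + 1) where
  carrier : Type u
  [str : NonUnitalCStarAlgebra carrier]

attribute [instance] CStarAlgebraBundle.str

/-- A bundled C*-algebra together with its canonical partial order (in which `0 ≤ a` iff
`a` is a sum of elements `star x * x`; such an order is unique when it exists). -/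
structure OrderedCStarAlgebraBundle : Type (u + 1) where
  carrier : Type u
  [str : NonUnitalCStarAlgebra carrier]
  [po : PartialOrder carrier]
  [sor : StarOrderedRing carrier]

attribute [instance] OrderedCStarAlgebraBundle.str OrderedCStarAlgebraBundle.po
  OrderedCStarAlgebraBundle.sor

/-! ### Representations, the primitive ideal space, CCR and type I algebras -/

/-- A representation of `A` on a complex Hilbert space (in the same universe as `A`). -/
structure HilbertRep (A : Type u) [NonUnitalCStarAlgebra A] : Type (u + 1) where
  H : Type u
  [normedAddCommGroup : NormedAddCommGroup H]
  [innerProductSpace : InnerProductSpace ℂ H]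
  [completeSpace : CompleteSpace H]
  π : A →⋆ₙₐ[ℂ] (H →L[ℂ] H)

attribute [instance] HilbertRep.normedAddCommGroup HilbertRep.innerProductSpace
  HilbertRep.completeSpace

variable {A : Type u} [NonUnitalCStarAlgebra A]

/-- (Topological) irreducibility: the representation is non-zero and has no non-trivial
closed invariant subspace. -/
def HilbertRep.IsIrreducible (ρ : HilbertRep A) : Prop :=
  (∃ a, ρ.π a ≠ 0) ∧ ∀ K : Submodule ℂ ρ.H, IsClosed (K : Set ρ.H) →
    (∀ a : A, ∀ x ∈ K, ρ.π a x ∈ K) → K = ⊥ ∨ K = ⊤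

/-- The kernel of a representation, as a subset of `A`. -/
def HilbertRep.ker (ρ : HilbertRep A) : Set A := {a : A | ρ.π a = 0}

/-- A primitive ideal is the kernel of an irreducible representation. -/
def IsPrimitiveIdeal (A : Type u) [NonUnitalCStarAlgebra A] (I : Set A) : Prop :=
  ∃ ρ : HilbertRep A, ρ.IsIrreducible ∧ I = ρ.ker

/-- The primitive ideal space of `A`. -/
def PrimSpace (A : Type u) [NonUnitalCStarAlgebra A] : Type u :=
  {I : Set A // IsPrimitiveIdeal A I}

/-- The hull-kernel (Jacobson) topology on `Prim(A)`: the closed sets are the sets of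
primitive ideals containing a given subset of `A`. -/
instance (A : Type u) [NonUnitalCStarAlgebra A] : TopologicalSpace (PrimSpace A) :=
  TopologicalSpace.generateFrom
    {U : Set (PrimSpace A) | ∃ S : Set A, U = {I : PrimSpace A | ¬ S ⊆ I.1}}

/-- The topological dimension of a C*-algebra: the supremum of the local covering dimensions
of all locally closed Hausdorff subsets of `Prim(A)`. -/
def topDim (A : Type u) [NonUnitalCStarAlgebra A] : ℕ∞ :=
  ⨆ S : {S : Set (PrimSpace A) // IsLocallyClosed S ∧ T2Space ↥S}, locDim ↥S.1

/-- `T` is a rank-one projection. -/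
def IsRankOneProjection {H : Type*} [NormedAddCommGroup H] [InnerProductSpace ℂ H]
    [CompleteSpace H] (T : H →L[ℂ] H) : Prop :=
  IsSelfAdjoint T ∧ T * T = T ∧ Module.finrank ℂ (LinearMap.range (T : H →ₗ[ℂ] H)) = 1

/-- A C*-algebra is CCR (liminal) if every irreducible representation takes values in the
compact operators. -/
def IsCCR (A : Type u) [NonUnitalCStarAlgebra A] : Prop :=
  ∀ ρ : HilbertRep A, ρ.IsIrreducible → ∀ a : A, IsCompactOperator ⇑(ρ.π a)

/-- `A` has continuous trace: the spectrum (identified with `Prim(A)`, as continuous trace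
algebras are CCR) is Hausdorff and Fell's condition holds. -/
def HasContinuousTrace (A : Type u) [NonUnitalCStarAlgebra A] : Prop :=
  T2Space (PrimSpace A) ∧
    ∀ I : PrimSpace A, ∃ U ∈ 𝓝 I, ∃ a : A, (∃ b : A, a = star b * b) ∧
      ∀ J : PrimSpace A, J ∈ U → ∀ ρ : HilbertRep A, ρ.IsIrreducible → ρ.ker = J.1 →
        IsRankOneProjection (ρ.π a)

/-- A composition series for `A` of length `μ` : an increasing, ordinal-indexed family of
closed two-sided ideals with `J μ = A`, continuous at limit ordinals. -/
def IsCompositionSeries (A : Type u) [NonUnitalCStarAlgebra A] (μ : Ordinal.{u})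
    (J : Ordinal.{u} → NonUnitalStarSubalgebra ℂ A) : Prop :=
  (∀ α, α ≤ μ → IsClosed ((J α : Set A))) ∧
  (∀ α, α ≤ μ → IsIdealIn (J α) ⊤) ∧
  (∀ α β, α ≤ β → β ≤ μ → J α ≤ J β) ∧
  J μ = ⊤ ∧
  ∀ α, α ≤ μ → Order.IsSuccLimit α →
    (J α : Set A) = closure (⋃ γ : {γ : Ordinal.{u} // γ < α}, (J γ.1 : Set A))

/-- The quotient `J' / J` is a CCR algebra, phrased via a surjective star homomorphism out of
`J'` with kernel `J`. -/
def QuotientIsCCR (J' J : NonUnitalStarSubalgebra ℂ A) : Prop :=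
  ∃ B : CStarAlgebraBundle.{u}, ∃ φ : J' →⋆ₙₐ[ℂ] B.carrier,
    Function.Surjective φ ∧ (∀ x : J', φ x = 0 ↔ (x : A) ∈ J) ∧ IsCCR B.carrier

/-- A C*-algebra is type I (postliminal) if it has a composition series starting at `0`
whose successive quotients are CCR. -/
def IsTypeI (A : Type u) [NonUnitalCStarAlgebra A] : Prop :=
  ∃ μ : Ordinal.{u}, ∃ J : Ordinal.{u} → NonUnitalStarSubalgebra ℂ A,
    IsCompositionSeries A μ J ∧ J 0 = ⊥ ∧
      ∀ α, α < μ → QuotientIsCCR (J (α + 1)) (J α)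

/-! ### Noncommutative dimension theories -/

open TopologicalSpace in
/-- `IsDimTheory Mem d` : `d` is a noncommutative dimension theory for the class `Mem` of
C*-algebras (`d` is defined as a total function; only its values on `Mem` matter). The
fields record that `Mem` is closed under isomorphism, ideals, quotients, finite direct sums
and minimal unitizations, that `d` is isomorphism invariant, and axioms (D1)-(D6). -/
structure IsDimTheory (Mem : ∀ (A : Type u) [NonUnitalCStarAlgebra A], Prop)
    (d : ∀ (A : Type u) [NonUnitalCStarAlgebra A], ℕ∞) : Prop where
  mem_iso : ∀ (A B : Type u) [NonUnitalCStarAlgebra A] [NonUnitalCStarAlgebra B],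
    (A ≃⋆ₐ[ℂ] B) → Mem A → Mem B
  mem_ideal : ∀ (A : Type u) [NonUnitalCStarAlgebra A] (J : NonUnitalStarSubalgebra ℂ A)
    (hJ : IsClosed (J : Set A)), IsIdealIn J ⊤ → Mem A → haveI := hJ; Mem J
  mem_quotient : ∀ (A B : Type u) [NonUnitalCStarAlgebra A] [NonUnitalCStarAlgebra B]
    (φ : A →⋆ₙₐ[ℂ] B), Function.Surjective φ → Mem A → Mem B
  mem_sum : ∀ (A B : Type u) [NonUnitalCStarAlgebra A] [NonUnitalCStarAlgebra B],
    Mem A → Mem B → Mem (A × B)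
  mem_unitization : ∀ (A : Type u) [NonUnitalCStarAlgebra A], Mem A → Mem (Unitization ℂ A)
  d_iso : ∀ (A B : Type u) [NonUnitalCStarAlgebra A] [NonUnitalCStarAlgebra B],
    (A ≃⋆ₐ[ℂ] B) → Mem A → d A = d B
  d1 : ∀ (A : Type u) [NonUnitalCStarAlgebra A] (J : NonUnitalStarSubalgebra ℂ A)
    (hJ : IsClosed (J : Set A)), IsIdealIn J ⊤ → Mem A → haveI := hJ; d J ≤ d A
  d2 : ∀ (A B : Type u) [NonUnitalCStarAlgebra A] [NonUnitalCStarAlgebra B]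
    (φ : A →⋆ₙₐ[ℂ] B), Function.Surjective φ → Mem A → d B ≤ d A
  d3 : ∀ (A B : Type u) [NonUnitalCStarAlgebra A] [NonUnitalCStarAlgebra B],
    Mem A → Mem B → d (A × B) = max (d A) (d B)
  d4 : ∀ (A : Type u) [NonUnitalCStarAlgebra A], Mem A → d (Unitization ℂ A) = d A
  d5 : ∀ (A : Type u) [NonUnitalCStarAlgebra A] (n : ℕ), Mem A →
    ∀ {ι : Type u} (S : ι → NonUnitalStarSubalgebra ℂ A), ApproximatedBy S →
      (∀ i, ∃ hc : IsClosed ((S i : Set A)),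
        haveI := hc; Mem (S i) ∧ d (S i) ≤ (n : ℕ∞)) →
      d A ≤ (n : ℕ∞)
  d6 : ∀ (A : Type u) [NonUnitalCStarAlgebra A] (C : NonUnitalStarSubalgebra ℂ A),
    IsClosed (C : Set A) → SeparableSpace C → Mem A →
      ∃ D : NonUnitalStarSubalgebra ℂ A, ∃ hD : IsClosed ((D : Set A)), C ≤ D ∧
        SeparableSpace D ∧ (haveI := hD; Mem D ∧ d D ≤ d A)

/-! ### Compact operators, stabilization and tensor products -/

/-- The Hilbert space `ℓ²(ℕ)`. -/
abbrev HilbertL2 : Type := lp (fun _ : ℕ => ℂ) 2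

/-- The compact operators on a Hilbert space `H`, as a subalgebra of `H →L[ℂ] H`. -/
def compactsSubalg (H : Type*) [NormedAddCommGroup H] [InnerProductSpace ℂ H]
    [CompleteSpace H] : NonUnitalStarSubalgebra ℂ (H →L[ℂ] H) where
  carrier := {T : H →L[ℂ] H | IsCompactOperator ⇑T ∧ IsCompactOperator ⇑(star T)}
  add_mem' := fun hf hg =>
    ⟨by rw [ContinuousLinearMap.coe_add']; exact hf.1.add hg.1,
     by rw [star_add, ContinuousLinearMap.coe_add']; exact hf.2.add hg.2⟩
  zero_mem' :=
    ⟨by rw [ContinuousLinearMap.coe_zero']; exact isCompactOperator_zero,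
     by rw [star_zero, ContinuousLinearMap.coe_zero']; exact isCompactOperator_zero⟩
  mul_mem' := fun {f g} hf hg =>
    ⟨by exact hf.1.comp_clm g,
     by rw [star_mul]; exact hg.2.comp_clm (star f)⟩
  smul_mem' := fun c {f} hf =>
    ⟨by rw [ContinuousLinearMap.coe_smul']; exact hf.1.smul c,
     by rw [star_smul, ContinuousLinearMap.coe_smul']; exact hf.2.smul (star c)⟩
  star_mem' := fun {f} hf => ⟨hf.2, by rw [star_star]; exact hf.1⟩

theorem compactsSubalg_isClosed (H : Type*) [NormedAddCommGroup H] [InnerProductSpace ℂ H]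
    [CompleteSpace H] : IsClosed ((compactsSubalg H : Set (H →L[ℂ] H))) := by
  have h1 : IsClosed {f : H →L[ℂ] H | IsCompactOperator ⇑f} := isClosed_setOf_isCompactOperator
  have h2 : (compactsSubalg H : Set (H →L[ℂ] H)) =
      {f : H →L[ℂ] H | IsCompactOperator ⇑f} ∩
        (star ⁻¹' {f : H →L[ℂ] H | IsCompactOperator ⇑f}) := rfl
  rw [h2]
  exact h1.inter (h1.preimage continuous_star)

/-- The C*-algebra `𝕂` of compact operators on the separable infinite-dimensional Hilbert
space `ℓ²(ℕ)`. -/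
abbrev KCompact : Type := ↥(compactsSubalg HilbertL2)

noncomputable instance : NonUnitalCStarAlgebra KCompact :=
  haveI := compactsSubalg_isClosed HilbertL2
  NonUnitalStarSubalgebra.nonUnitalCStarAlgebra _

/-- `t` realizes `T` as a C*-tensor product of `A` and `B` : `t` is a bilinear map which is
multiplicative and star preserving on elementary tensors, the induced map on the algebraic
tensor product is injective, and its range is dense in `T`. (For nuclear algebras -- e.g.
type I algebras, or when one factor is `𝕂` -- such a `T` is unique up to isomorphism.) -/
def IsCStarTensorProduct (A : Type u) (B : Type v) (T : Type w) [NonUnitalCStarAlgebra A]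
    [NonUnitalCStarAlgebra B] [NonUnitalCStarAlgebra T] (t : A →ₗ[ℂ] B →ₗ[ℂ] T) : Prop :=
  (∀ (a a' : A) (b b' : B), t a b * t a' b' = t (a * a') (b * b')) ∧
  (∀ (a : A) (b : B), star (t a b) = t (star a) (star b)) ∧
  Function.Injective (TensorProduct.lift t) ∧
  DenseRange ⇑(TensorProduct.lift t)

/-- Two C*-algebras are stably isomorphic if `A ⊗ 𝕂 ≅ B ⊗ 𝕂`. -/
def StablyIsomorphic (A B : Type u) [NonUnitalCStarAlgebra A] [NonUnitalCStarAlgebra B] :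
    Prop :=
  ∃ (TA TB : CStarAlgebraBundle.{u}) (tA : A →ₗ[ℂ] KCompact →ₗ[ℂ] TA.carrier)
    (tB : B →ₗ[ℂ] KCompact →ₗ[ℂ] TB.carrier),
    IsCStarTensorProduct A KCompact TA.carrier tA ∧
    IsCStarTensorProduct B KCompact TB.carrier tB ∧
    Nonempty (TA.carrier ≃⋆ₐ[ℂ] TB.carrier)

/-- Morita equivalence of C*-algebras, via the linking algebra picture: `A` and `B` are
Morita equivalent iff they are isomorphic to full hereditary subalgebras of a common
C*-algebra. -/
def MoritaEquivalent (A B : Type u) [NonUnitalCStarAlgebra A] [NonUnitalCStarAlgebra B] :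
    Prop :=
  ∃ C : OrderedCStarAlgebraBundle.{u},
    ∃ A' B' : NonUnitalStarSubalgebra ℂ C.carrier,
      IsClosed ((A' : Set C.carrier)) ∧ IsClosed ((B' : Set C.carrier)) ∧
      IsHereditaryIn A' ⊤ ∧ IsFullIn A' ⊤ ∧ IsHereditaryIn B' ⊤ ∧ IsFullIn B' ⊤ ∧
      Nonempty (A ≃⋆ₐ[ℂ] A') ∧ Nonempty (B ≃⋆ₐ[ℂ] B')

/-! ### Stable rank, connected stable rank, real rank -/

/-- The stable rank of a C*-algebra (`sr(A) := sr(Ã)`), valued in `ℕ∞` : the least `n` such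
that the `n`-tuples generating `Ã` as a left ideal are dense in `Ãⁿ`. -/
def stableRank (A : Type u) [NonUnitalCStarAlgebra A] : ℕ∞ :=
  sInf {m : ℕ∞ | ∃ n : ℕ, m = (n : ℕ∞) ∧
    Dense {v : Fin n → Unitization ℂ A |
      ∃ c : Fin n → Unitization ℂ A, ∑ i, c i * v i = 1}}

/-- The connected stable rank of a C*-algebra, valued in `ℕ∞`. -/
def connectedStableRank (A : Type u) [NonUnitalCStarAlgebra A] : ℕ∞ :=
  sInf {m : ℕ∞ | ∃ n : ℕ, m = (n : ℕ∞) ∧ ∀ k : ℕ, n ≤ k →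
    IsConnected {v : Fin k → Unitization ℂ A |
      ∃ c : Fin k → Unitization ℂ A, ∑ i, c i * v i = 1}}

/-- The real rank of a C*-algebra, valued in `ℕ∞` : the least `n` such that the
self-adjoint `(n+1)`-tuples generating `Ã` as a left ideal are dense in `(Ã_sa)^(n+1)`. -/
def realRank (A : Type u) [NonUnitalCStarAlgebra A] : ℕ∞ :=
  sInf {m : ℕ∞ | ∃ n : ℕ, m = (n : ℕ∞) ∧
    Dense {v : Fin (n + 1) → selfAdjoint (Unitization ℂ A) |
      ∃ c : Fin (n + 1) → Unitization ℂ A, ∑ i, c i * (v i : Unitization ℂ A) = 1}}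

end

noncomputable section

/-! The images `ψ j (A j)` for `j` in a cofinal set `J` are closed (ranges of
*-homomorphisms between C*-algebras are closed), they are quotients of the `A j`, so by (D2)
they have dimension at most `sup_{j ∈ J} d (A j)`, and, being increasing with dense union,
they approximate `A`. Axiom (D5) then gives `d A ≤ sup_{j ∈ J} d (A j)`. -/

open scoped CStarAlgebra ComplexStarModule

namespace NonUnitalStarAlgHom

variable {A B : Type*} [NonUnitalCStarAlgebra A] [NonUnitalCStarAlgebra B]

/-- Clamping the spectrum of `b` to `[-‖θ b‖, ‖θ b‖]` does not change `θ b`, since the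
quasispectrum of `θ b` already lies in that interval. -/
lemma exists_isSelfAdjoint_map_eq_norm_le (θ : B →⋆ₙₐ[ℂ] A) {b : B}
    (hb : IsSelfAdjoint b) : ∃ z : B, IsSelfAdjoint z ∧ θ z = θ b ∧ ‖z‖ ≤ ‖θ b‖ := by
  set N := ‖θ b‖
  have hN : 0 ≤ N := norm_nonneg _
  set g : ℝ → ℝ := fun t => max (-N) (min t N)
  have hspec : Set.EqOn g id (quasispectrum ℝ (θ b)) := fun x hx => by
    have hx' : |x| ≤ N := by
      simpa [cfcₙ_id ℝ (θ b)] using norm_apply_le_norm_cfcₙ (id : ℝ → ℝ) (θ b) hx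
    simp [g, min_eq_left (abs_le.mp hx').2, max_eq_right (abs_le.mp hx').1]
  refine ⟨cfcₙ g b, cfcₙ_predicate g b, ?_, norm_cfcₙ_le fun x _ => ?_⟩
  · rw [θ.map_cfcₙ g b, cfcₙ_congr hspec, cfcₙ_id ℝ (θ b)]
  · rw [Real.norm_eq_abs, abs_le]
    exact ⟨le_max_left _ _, max_le (by linarith) (min_le_right _ _)⟩

def selfAdjointRestrict (θ : B →⋆ₙₐ[ℂ] A) : NormedAddGroupHom (selfAdjoint B) A :=
  AddMonoidHom.mkNormedAddGroupHom
    { toFun := fun z => θ z, map_zero' := by simp, map_add' := fun x y => by simp }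
    1 fun z => by simpa using NonUnitalStarAlgHom.norm_apply_le θ (z : B)

@[simp]
lemma selfAdjointRestrict_apply (θ : B →⋆ₙₐ[ℂ] A) (z : selfAdjoint B) :
    θ.selfAdjointRestrict z = θ z :=
  rfl

/-- Norm-controlled lifts from the range extend to its closure by completeness of `selfAdjoint B`
(`controlled_closure_of_complete`). -/
lemma isClosed_range_selfAdjointRestrict (θ : B →⋆ₙₐ[ℂ] A) :
    IsClosed (θ.selfAdjointRestrict.range : Set A) := by
  have hB : IsClosed (selfAdjoint B : Set B) := isClosed_eq continuous_star continuous_id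
  have : CompleteSpace (selfAdjoint B) := hB.completeSpace_coe
  have hlift : θ.selfAdjointRestrict.SurjectiveOnWith θ.selfAdjointRestrict.range 1 := by
    rintro _ ⟨z, rfl⟩
    obtain ⟨w, hw, hθw, hnorm⟩ := θ.exists_isSelfAdjoint_map_eq_norm_le z.2
    exact ⟨⟨w, hw⟩, hθw, by simpa using hnorm⟩
  refine isClosed_of_closure_subset fun y hy => ?_
  rw [← AddSubgroup.topologicalClosure_coe] at hy
  obtain ⟨w, hw, -⟩ := controlled_closure_of_complete one_pos one_pos hlift y hy
  exact ⟨w, hw⟩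

/-- Real and imaginary parts of limits of elements of the range are limits of images of
self-adjoint elements. -/
theorem isClosed_range (θ : B →⋆ₙₐ[ℂ] A) : IsClosed (Set.range θ) := by
  have hpart : ∀ p : A → A, Continuous p → (∀ x, p (θ x) ∈ θ.selfAdjointRestrict.range) →
      ∀ y ∈ closure (Set.range θ), ∃ b, θ b = p y := by
    intro p hp hθp y hy
    have : p y ∈ closure (θ.selfAdjointRestrict.range : Set A) :=
      map_mem_closure hp hy (by rintro _ ⟨x, rfl⟩; exact hθp x)
    obtain ⟨z, hz⟩ := θ.isClosed_range_selfAdjointRestrict.closure_subset this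
    exact ⟨z, hz⟩
  refine isClosed_of_closure_subset fun y hy => ?_
  obtain ⟨b₁, hb₁⟩ := hpart (fun a => ℜ a) (by simp_rw [realPart_apply_coe]; fun_prop)
    (fun x => ⟨ℜ x, by simp [map_realPart]⟩) y hy
  obtain ⟨b₂, hb₂⟩ := hpart (fun a => ℑ a) (by simp_rw [imaginaryPart_apply_coe]; fun_prop)
    (fun x => ⟨ℑ x, by simp [map_imaginaryPart]⟩) y hy
  refine ⟨b₁ + Complex.I • b₂, ?_⟩
  rw [map_add, map_smul, hb₁, hb₂, realPart_add_I_smul_imaginaryPart]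

end NonUnitalStarAlgHom

lemma approximatedBy_of_monotone_of_dense {A : Type*} [NonUnitalCStarAlgebra A] {I : Type*}
    [Preorder I] [IsDirected I (· ≤ ·)] [Nonempty I] {S : I → NonUnitalStarSubalgebra ℂ A}
    (hS : Monotone S) (hdense : Dense (⋃ i, (S i : Set A))) {J : Set I}
    (hJ : ∀ i, ∃ j ∈ J, i ≤ j) : ApproximatedBy fun j : J => S j := by
  classical
  intro F ε hε
  have hclose : ∀ x : A, ∃ i, ∃ y ∈ S i, ‖x - y‖ < ε := fun x => by
    obtain ⟨y, hy, hxy⟩ := Metric.mem_closure_iff.mp (hdense x) ε hε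
    obtain ⟨i, hyi⟩ := Set.mem_iUnion.mp hy
    exact ⟨i, y, hyi, by rwa [← dist_eq_norm]⟩
  choose index y hy hxy using hclose
  obtain ⟨i₀, hi₀⟩ := (F.image index).exists_le
  obtain ⟨j, hjJ, hi₀j⟩ := hJ i₀
  exact ⟨⟨j, hjJ⟩, fun x hx =>
    ⟨y x, hS ((hi₀ _ (Finset.mem_image_of_mem index hx)).trans hi₀j) (hy x), hxy x⟩⟩

namespace IsDimTheory

variable {Mem : ∀ (A : Type u) [NonUnitalCStarAlgebra A], Prop}
  {d : ∀ (A : Type u) [NonUnitalCStarAlgebra A], ℕ∞}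

theorem le_of_approximatedBy_range (hd : IsDimTheory Mem d) {A : Type u}
    [NonUnitalCStarAlgebra A] (hA : Mem A) {ι : Type*} {B : ι → Type u}
    [∀ i, NonUnitalCStarAlgebra (B i)] (ψ : ∀ i, B i →⋆ₙₐ[ℂ] A)
    (happrox : ApproximatedBy fun i => NonUnitalStarAlgHom.range (ψ i)) (hB : ∀ i, Mem (B i))
    {m : ℕ∞} (hm : ∀ i, d (B i) ≤ m) : d A ≤ m := by
  induction m using ENat.recTopCoe with
  | top => exact le_top
  | coe n =>
    refine hd.d5 A n hA (fun S : {S // ∃ i, S = NonUnitalStarAlgHom.range (ψ i)} => S.1)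
      (fun F ε hε => ?_) ?_
    · obtain ⟨i, hi⟩ := happrox F ε hε
      exact ⟨⟨_, i, rfl⟩, hi⟩
    · rintro ⟨_, i, rfl⟩
      have hc : IsClosed (NonUnitalStarAlgHom.range (ψ i) : Set A) := by
        simpa only [NonUnitalStarAlgHom.coe_range] using (ψ i).isClosed_range
      have hsurj : Function.Surjective (NonUnitalStarAlgHom.rangeRestrict (ψ i)) := by
        rintro ⟨_, x, rfl⟩
        exact ⟨x, rfl⟩
      exact ⟨hc, hd.mem_quotient _ _ _ hsurj (hB i), (hd.d2 _ _ _ hsurj (hB i)).trans (hm i)⟩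

end IsDimTheory

theorem stmt1_general {Mem : ∀ (A : Type u) [NonUnitalCStarAlgebra A], Prop}
    {d : ∀ (A : Type u) [NonUnitalCStarAlgebra A], ℕ∞} (hd : IsDimTheory Mem d)
    {I : Type v} [Preorder I] [IsDirected I (· ≤ ·)] [Nonempty I]
    (Ai : I → Type u) [∀ i, NonUnitalCStarAlgebra (Ai i)]
    (φ : ∀ i j, i ≤ j → (Ai i →⋆ₙₐ[ℂ] Ai j))
    (A : Type u) [NonUnitalCStarAlgebra A] (ψ : ∀ i, Ai i →⋆ₙₐ[ℂ] A)
    (hcomp : ∀ i j (hij : i ≤ j) (x : Ai i), ψ j (φ i j hij x) = ψ i x)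
    (hdense : Dense (⋃ i, Set.range ⇑(ψ i)))
    (hAi : ∀ i, Mem (Ai i)) (hA : Mem A) :
    d A ≤ sInf {m : ℕ∞ | ∃ J : Set I, (∀ i : I, ∃ j ∈ J, i ≤ j) ∧
      m = ⨆ j : J, d (Ai j.1)} := by
  refine le_sInf ?_
  rintro _ ⟨J, hJ, rfl⟩
  have hmono : Monotone fun i => NonUnitalStarAlgHom.range (ψ i) := fun i j hij => by
    rintro _ ⟨x, rfl⟩
    exact ⟨φ i j hij x, hcomp i j hij x⟩
  have happrox : ApproximatedBy fun j : J => NonUnitalStarAlgHom.range (ψ j) :=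
    approximatedBy_of_monotone_of_dense hmono
      (by simpa only [NonUnitalStarAlgHom.coe_range] using hdense) hJ
  exact hd.le_of_approximatedBy_range hA (fun j : J => ψ j) happrox (fun j => hAi j)
    (fun j => le_iSup (fun j : J => d (Ai j.1)) j)

/-- If `d` is a dimension theory and `A` is the inductive limit of an
inductive system `(Aᵢ, φᵢⱼ)` over a directed set (realized by compatible maps `ψᵢ : Aᵢ → A`
with dense union of ranges and the limit-norm condition), with all `Aᵢ` and `A` in the
class, then `d A ≤ liminf_i d (Aᵢ)`. -/
theorem stmt1 {Mem : ∀ (A : Type u) [NonUnitalCStarAlgebra A], Prop}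
    {d : ∀ (A : Type u) [NonUnitalCStarAlgebra A], ℕ∞} (hd : IsDimTheory Mem d)
    {I : Type v} [Preorder I] [IsDirected I (· ≤ ·)] [Nonempty I]
    (Ai : I → Type u) [∀ i, NonUnitalCStarAlgebra (Ai i)]
    (φ : ∀ i j, i ≤ j → (Ai i →⋆ₙₐ[ℂ] Ai j))
    (hφid : ∀ i (x : Ai i), φ i i le_rfl x = x)
    (hφcomp : ∀ i j k (hij : i ≤ j) (hjk : j ≤ k) (x : Ai i),
      φ j k hjk (φ i j hij x) = φ i k (hij.trans hjk) x)
    (A : Type u) [NonUnitalCStarAlgebra A] (ψ : ∀ i, Ai i →⋆ₙₐ[ℂ] A)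
    (hcomp : ∀ i j (hij : i ≤ j) (x : Ai i), ψ j (φ i j hij x) = ψ i x)
    (hdense : Dense (⋃ i, Set.range ⇑(ψ i)))
    (hnorm : ∀ i (x : Ai i), ‖ψ i x‖ = ⨅ j : {j : I // i ≤ j}, ‖φ i j.1 j.2 x‖)
    (hAi : ∀ i, Mem (Ai i)) (hA : Mem A) :
    d A ≤ sInf {m : ℕ∞ | ∃ J : Set I, (∀ i : I, ∃ j ∈ J, i ≤ j) ∧
      m = ⨆ j : J, d (Ai j.1)} :=
  stmt1_general hd Ai φ A ψ hcomp hdense hAi hA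

end
end

section
/- Let A be a C*-algebra, let B ⊂ A be a full, hereditary sub-C*-algebra, and let C ⊂ A be a separable sub-C*-algebra. Then there exists a separable sub-C*-algebra D ⊂ A containing C such that D ∩ B is a full, hereditary sub-C*-algebra of D. -/
noncomputable section

/-!
Fullness of `B` means that the algebraic two-sided ideal generated by `B` is dense in `A`, so each
element of `A` is approximated, to any precision, by an element of that ideal built from finitely
many factors `a`, `b ∈ B`, `c`. Close a countable dense subset of `C` under "add the factors used
to approximate this element at every precision `1 / (n + 1)`". The resulting countable set
generates a separable C*-algebra `D` each of whose generators lies in the closure of the ideal of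
`D` generated by `D ∩ B`, so `D ∩ B` is full in `D`. Heredity of `D ∩ B` comes for free from `B`.
-/

open TopologicalSpace NonUnitalStarAlgebra NonUnitalStarSubalgebra

variable {A : Type*} [NonUnitalCStarAlgebra A]

theorem exists_countable_superset_closedUnder {X : Type*} (f : X → X → Set X)
    (hf : ∀ x y, (f x y).Countable) {s : Set X} (hs : s.Countable) :
    ∃ t, s ⊆ t ∧ t.Countable ∧ ∀ x ∈ t, ∀ y ∈ t, f x y ⊆ t := by
  let step : Set X → Set X := fun u => u ∪ ⋃ x ∈ u, ⋃ y ∈ u, f x y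
  let T : ℕ → Set X := fun n => step^[n] s
  have hT_succ : ∀ n, T (n + 1) = step (T n) := fun n => Function.iterate_succ_apply' step n s
  have hT_mono : Monotone T :=
    monotone_nat_of_le_succ fun n => (hT_succ n).symm ▸ Set.subset_union_left
  have hT_countable : ∀ n, (T n).Countable := by
    intro n
    induction n with
    | zero => exact hs
    | succ n ih =>
      rw [hT_succ]
      exact ih.union (ih.biUnion fun x _ => ih.biUnion fun y _ => hf x y)
  refine ⟨⋃ n, T n, Set.subset_iUnion T 0, Set.countable_iUnion hT_countable, ?_⟩
  intro x hx y hy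
  obtain ⟨m, hxm⟩ := Set.mem_iUnion.1 hx
  obtain ⟨n, hyn⟩ := Set.mem_iUnion.1 hy
  have hfxy : f x y ⊆ T (max m n + 1) := fun z hz => by
    rw [hT_succ]
    exact .inr <| Set.mem_biUnion (hT_mono (le_max_left m n) hxm) <|
      Set.mem_biUnion (hT_mono (le_max_right m n) hyn) hz
  exact hfxy.trans (Set.subset_iUnion T _)

theorem Set.Countable.subsemigroupClosure {M : Type*} [Mul M] {s : Set M} (hs : s.Countable) :
    (Subsemigroup.closure s : Set M).Countable := by
  obtain ⟨t, hst, ht, hmul⟩ :=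
    exists_countable_superset_closedUnder (fun x y : M => {x * y})
      (fun _ _ => Set.countable_singleton _) hs
  let T : Subsemigroup M := ⟨t, fun ha hb => hmul _ ha _ hb rfl⟩
  exact ht.mono (Subsemigroup.closure_le (S := T) |>.2 hst)

theorem Set.Countable.isSeparable_adjoin {s : Set A} (hs : s.Countable) :
    IsSeparable (adjoin ℂ s : Set A) := by
  change IsSeparable ((adjoin ℂ s).toSubmodule : Set A)
  rw [adjoin_eq_span]
  have hstar : (star s).Countable := Set.image_star (s := s) ▸ hs.image star
  exact (hs.union hstar).subsemigroupClosure.isSeparable.span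

theorem Set.Countable.separableSpace_topologicalClosure_adjoin {s : Set A} (hs : s.Countable) :
    SeparableSpace (adjoin ℂ s).topologicalClosure :=
  hs.isSeparable_adjoin.closure.separableSpace

theorem isIdealIn_adjoin {D : NonUnitalStarSubalgebra ℂ A} {s : Set A} (hsD : s ⊆ D)
    (hs : ∀ a ∈ D, ∀ x ∈ s, a * x ∈ s ∧ x * a ∈ s) :
    IsIdealIn (adjoin ℂ s) D := by
  refine ⟨adjoin_le hsD, fun a ha x hx => ?_⟩
  induction hx using adjoin_induction generalizing a with
  | mem x hx =>
    exact ⟨subset_adjoin ℂ s (hs a ha x hx).1,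
      subset_adjoin ℂ s (hs a ha x hx).2⟩
  | add x y _ _ ihx ihy =>
    rw [mul_add, add_mul]
    exact ⟨add_mem (ihx a ha).1 (ihy a ha).1, add_mem (ihx a ha).2 (ihy a ha).2⟩
  | zero => simp only [mul_zero, zero_mul, zero_mem, and_self]
  | mul x y hx hy ihx ihy =>
    constructor
    · rw [← mul_assoc]; exact mul_mem (ihx a ha).1 hy
    · rw [mul_assoc]; exact mul_mem hx (ihy a ha).2
  | smul r x _ ih =>
    rw [mul_smul_comm, smul_mul_assoc]
    exact ⟨SMulMemClass.smul_mem r (ih a ha).1, SMulMemClass.smul_mem r (ih a ha).2⟩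
  | star x _ ih =>
    obtain ⟨hl, hr⟩ := ih (star a) (star_mem ha)
    constructor
    · simpa only [star_mul, star_star] using star_mem hr
    · simpa only [star_mul, star_star] using star_mem hl

theorem IsIdealIn.topologicalClosure {J D : NonUnitalStarSubalgebra ℂ A}
    (hD : IsClosed (D : Set A)) (hJ : IsIdealIn J D) : IsIdealIn J.topologicalClosure D := by
  refine ⟨J.topologicalClosure_minimal hJ.1 hD, fun a ha x hx => ⟨?_, ?_⟩⟩
  · exact map_mem_closure (continuous_const_mul a) hx fun y hy => (hJ.2 a ha y hy).1
  · exact map_mem_closure (f := (· * a)) (continuous_mul_const a) hx fun y hy => (hJ.2 a ha y hy).2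

section IdealGenerators

open scoped Pointwise

variable {M : Type*}

/-- Without a unit, the two-sided ideal of the subalgebra `S` generated by `S ∩ B` is spanned by
four kinds of products, not just by `S * (S ∩ B) * S`. -/
def idealGenerators [Mul M] (S B : Set M) : Set M :=
  S ∩ B ∪ S * (S ∩ B) ∪ (S ∩ B) * S ∪ S * (S ∩ B) * S

theorem mem_idealGenerators [Mul M] {S B : Set M} {x : M} :
    x ∈ idealGenerators S B ↔ x ∈ S ∩ B ∨ (∃ a ∈ S, ∃ b ∈ S ∩ B, a * b = x) ∨
      (∃ b ∈ S ∩ B, ∃ c ∈ S, b * c = x) ∨ ∃ a ∈ S, ∃ b ∈ S ∩ B, ∃ c ∈ S, a * b * c = x := by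
  simp only [idealGenerators, Set.mem_union, Set.mem_mul, or_assoc]
  refine or_congr_right <| or_congr_right <| or_congr_right ⟨?_, ?_⟩
  · rintro ⟨_, ⟨a, ha, b, hb, rfl⟩, c, hc, rfl⟩
    exact ⟨a, ha, b, hb, c, hc, rfl⟩
  · rintro ⟨a, ha, b, hb, c, hc, rfl⟩
    exact ⟨_, ⟨a, ha, b, hb, rfl⟩, c, hc, rfl⟩

theorem idealGenerators_mono [Mul M] {S S' : Set M} (B : Set M) (h : S ⊆ S') :
    idealGenerators S B ⊆ idealGenerators S' B := by
  unfold idealGenerators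
  gcongr

theorem mul_mem_idealGenerators_univ [Semigroup M] {B : Set M} (a : M) {x : M}
    (hx : x ∈ idealGenerators Set.univ B) :
    a * x ∈ idealGenerators Set.univ B ∧ x * a ∈ idealGenerators Set.univ B := by
  simp only [mem_idealGenerators, Set.mem_univ, Set.univ_inter, true_and] at hx ⊢
  rcases hx with hb | ⟨a', b, hb, rfl⟩ | ⟨b, hb, c, rfl⟩ | ⟨a', b, hb, c, rfl⟩
  · exact ⟨.inr (.inl ⟨a, x, hb, rfl⟩), .inr (.inr (.inl ⟨x, hb, a, rfl⟩))⟩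
  · exact ⟨.inr (.inl ⟨a * a', b, hb, mul_assoc _ _ _⟩), .inr (.inr (.inr ⟨a', b, hb, a, rfl⟩))⟩
  · exact ⟨.inr (.inr (.inr ⟨a, b, hb, c, mul_assoc _ _ _⟩)),
      .inr (.inr (.inl ⟨b, hb, c * a, (mul_assoc _ _ _).symm⟩))⟩
  · exact ⟨.inr (.inr (.inr ⟨a * a', b, hb, c, by simp only [mul_assoc]⟩)),
      .inr (.inr (.inr ⟨a', b, hb, c * a, by simp only [mul_assoc]⟩))⟩

theorem exists_finite_of_mem_idealGenerators_univ [Mul M] {B : Set M} {x : M}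
    (hx : x ∈ idealGenerators Set.univ B) : ∃ F : Set M, F.Finite ∧ x ∈ idealGenerators F B := by
  simp only [mem_idealGenerators, Set.mem_univ, Set.univ_inter, true_and] at hx
  rcases hx with hb | ⟨a, b, hb, rfl⟩ | ⟨b, hb, c, rfl⟩ | ⟨a, b, hb, c, rfl⟩
  · exact ⟨{x}, Set.finite_singleton x, mem_idealGenerators.2 (.inl ⟨rfl, hb⟩)⟩
  · refine ⟨{a, b}, Set.toFinite _, mem_idealGenerators.2 (.inr (.inl ?_))⟩
    exact ⟨a, by simp, b, ⟨by simp, hb⟩, rfl⟩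
  · refine ⟨{b, c}, Set.toFinite _, mem_idealGenerators.2 (.inr (.inr (.inl ?_)))⟩
    exact ⟨b, ⟨by simp, hb⟩, c, by simp, rfl⟩
  · refine ⟨{a, b, c}, Set.toFinite _, mem_idealGenerators.2 (.inr (.inr (.inr ?_)))⟩
    exact ⟨a, by simp, b, ⟨by simp, hb⟩, c, by simp, rfl⟩

end IdealGenerators

theorem exists_finite_of_mem_adjoin_idealGenerators_univ {B : Set A} {x : A}
    (hx : x ∈ adjoin ℂ (idealGenerators Set.univ B)) :
    ∃ F : Set A, F.Finite ∧ x ∈ adjoin ℂ (idealGenerators F B) := by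
  have hmono : ∀ {F F' : Set A}, F ⊆ F' →
      adjoin ℂ (idealGenerators F B) ≤ adjoin ℂ (idealGenerators F' B) :=
    fun h => adjoin_mono (idealGenerators_mono B h)
  induction hx using adjoin_induction with
  | mem x hx =>
    obtain ⟨F, hF, hxF⟩ := exists_finite_of_mem_idealGenerators_univ hx
    exact ⟨F, hF, subset_adjoin ℂ _ hxF⟩
  | add x y _ _ ihx ihy =>
    obtain ⟨F, hF, hxF⟩ := ihx
    obtain ⟨F', hF', hyF'⟩ := ihy
    exact ⟨F ∪ F', hF.union hF', add_mem (hmono Set.subset_union_left hxF)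
      (hmono Set.subset_union_right hyF')⟩
  | zero => exact ⟨∅, Set.finite_empty, zero_mem _⟩
  | mul x y _ _ ihx ihy =>
    obtain ⟨F, hF, hxF⟩ := ihx
    obtain ⟨F', hF', hyF'⟩ := ihy
    exact ⟨F ∪ F', hF.union hF', mul_mem (hmono Set.subset_union_left hxF)
      (hmono Set.subset_union_right hyF')⟩
  | smul r x _ ih =>
    obtain ⟨F, hF, hxF⟩ := ih
    exact ⟨F, hF, SMulMemClass.smul_mem r hxF⟩
  | star x _ ih =>
    obtain ⟨F, hF, hxF⟩ := ih
    exact ⟨F, hF, star_mem hxF⟩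

theorem idealGenerators_subset_of_isIdealIn {B D J : NonUnitalStarSubalgebra ℂ A}
    (hJ : IsIdealIn J D) (hBJ : D ⊓ B ≤ J) : idealGenerators (D : Set A) B ⊆ J := by
  have hbJ : ∀ {b}, b ∈ (D : Set A) ∩ B → b ∈ J := fun hb => hBJ (mem_inf.2 hb)
  intro x hx
  rcases mem_idealGenerators.1 hx with hb | ⟨a, ha, b, hb, rfl⟩ | ⟨b, hb, c, hc, rfl⟩ |
      ⟨a, ha, b, hb, c, hc, rfl⟩
  · exact hbJ hb
  · exact (hJ.2 a ha b (hbJ hb)).1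
  · exact (hJ.2 c hc b (hbJ hb)).2
  · exact (hJ.2 c hc _ (hJ.2 a ha b (hbJ hb)).1).2

theorem IsFullIn.top_le_topologicalClosure_adjoin {B : NonUnitalStarSubalgebra ℂ A}
    (hB : IsFullIn B ⊤) :
    ⊤ ≤ (adjoin ℂ (idealGenerators Set.univ (B : Set A))).topologicalClosure := by
  have hideal : IsIdealIn (adjoin ℂ (idealGenerators Set.univ (B : Set A))) ⊤ :=
    isIdealIn_adjoin (by simp only [coe_top, Set.subset_univ])
      fun a _ _ hx => mul_mem_idealGenerators_univ a hx
  refine hB.2 _ (isClosed_topologicalClosure _)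
    (hideal.topologicalClosure (by simpa only [coe_top] using isClosed_univ)) fun b hb => ?_
  exact le_topologicalClosure _ (subset_adjoin ℂ _ (mem_idealGenerators.2 (.inl ⟨trivial, hb⟩)))

theorem IsFullIn.exists_countable_mem_topologicalClosure_adjoin
    {B : NonUnitalStarSubalgebra ℂ A} (hB : IsFullIn B ⊤) (a : A) :
    ∃ W : Set A, W.Countable ∧
      a ∈ (adjoin ℂ (idealGenerators W (B : Set A))).topologicalClosure := by
  have ha : a ∈ closure (adjoin ℂ (idealGenerators Set.univ (B : Set A)) : Set A) :=
    hB.top_le_topologicalClosure_adjoin (mem_top (R := ℂ))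
  have happrox : ∀ n : ℕ, ∃ F : Set A, F.Finite ∧
      ∃ x ∈ adjoin ℂ (idealGenerators F (B : Set A)), dist a x < 1 / (n + 1) := by
    intro n
    obtain ⟨x, hx, hdist⟩ := Metric.mem_closure_iff.1 ha (1 / (n + 1)) Nat.one_div_pos_of_nat
    obtain ⟨F, hF, hxF⟩ := exists_finite_of_mem_adjoin_idealGenerators_univ hx
    exact ⟨F, hF, x, hxF, hdist⟩
  choose F hF x hx hdist using happrox
  refine ⟨⋃ n, F n, Set.countable_iUnion fun n => (hF n).countable,
    Metric.mem_closure_iff.2 fun ε hε => ?_⟩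
  obtain ⟨n, hn⟩ := exists_nat_one_div_lt hε
  exact ⟨x n, adjoin_mono (idealGenerators_mono _ (Set.subset_iUnion F n)) (hx n),
    (hdist n).trans hn⟩

theorem isFullIn_inf_of_le_topologicalClosure_adjoin {B D : NonUnitalStarSubalgebra ℂ A}
    (hD : D ≤ (adjoin ℂ (idealGenerators (D : Set A) B)).topologicalClosure) :
    IsFullIn (D ⊓ B) D :=
  ⟨inf_le_left, fun _ hJc hJ hBJ => hD.trans <| topologicalClosure_minimal _
    (adjoin_le (idealGenerators_subset_of_isIdealIn hJ hBJ)) hJc⟩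

theorem IsHereditaryIn.inf [PartialOrder A] [StarOrderedRing A]
    {B D E : NonUnitalStarSubalgebra ℂ A} (hB : IsHereditaryIn B E) (hDE : D ≤ E) :
    IsHereditaryIn (D ⊓ B) D :=
  ⟨inf_le_left, fun a ha b hb h0 hab =>
    mem_inf.2 ⟨ha, hB.2 a (hDE ha) b (mem_inf.1 hb).2 h0 hab⟩⟩

theorem stmt2_general (A : Type u) [NonUnitalCStarAlgebra A] [PartialOrder A] [StarOrderedRing A]
    (B C : NonUnitalStarSubalgebra ℂ A)
    (hBher : IsHereditaryIn B ⊤) (hBfull : IsFullIn B ⊤)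
    (hCsep : TopologicalSpace.SeparableSpace C) :
    ∃ D : NonUnitalStarSubalgebra ℂ A, IsClosed (D : Set A) ∧
      TopologicalSpace.SeparableSpace D ∧ C ≤ D ∧
      IsHereditaryIn (D ⊓ B) D ∧ IsFullIn (D ⊓ B) D := by
  choose W hWc hW using hBfull.exists_countable_mem_topologicalClosure_adjoin
  obtain ⟨s, hsc, hsd⟩ := exists_countable_dense C
  obtain ⟨t, hst, htc, htW⟩ := exists_countable_superset_closedUnder (fun x _ => W x)
    (fun x _ => hWc x) (hsc.image Subtype.val)
  set D := (adjoin ℂ t).topologicalClosure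
  have htD : t ⊆ D := fun x hx => le_topologicalClosure _ (subset_adjoin ℂ t hx)
  have hCD : C ≤ D := fun x hx => closure_minimal (hst.trans htD) (isClosed_topologicalClosure _)
    (closure_subtype.1 (hsd ⟨x, hx⟩))
  refine ⟨D, isClosed_topologicalClosure _, htc.separableSpace_topologicalClosure_adjoin, hCD,
    hBher.inf le_top, isFullIn_inf_of_le_topologicalClosure_adjoin ?_⟩
  refine topologicalClosure_minimal _ (adjoin_le fun x hx => ?_) (isClosed_topologicalClosure _)
  exact closure_mono (adjoin_mono (idealGenerators_mono _ ((htW x hx x hx).trans htD))) (hW x)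

/-- Given a full hereditary sub-C*-algebra `B ⊆ A` and a separable
sub-C*-algebra `C ⊆ A`, there is a separable sub-C*-algebra `D ⊆ A` containing `C` such
that `D ∩ B` is a full hereditary sub-C*-algebra of `D`. -/
theorem stmt2 (A : Type u) [NonUnitalCStarAlgebra A] [PartialOrder A] [StarOrderedRing A]
    (B C : NonUnitalStarSubalgebra ℂ A)
    (hBc : IsClosed (B : Set A)) (hBher : IsHereditaryIn B ⊤) (hBfull : IsFullIn B ⊤)
    (hCc : IsClosed (C : Set A)) (hCsep : TopologicalSpace.SeparableSpace C) :
    ∃ D : NonUnitalStarSubalgebra ℂ A, IsClosed (D : Set A) ∧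
      TopologicalSpace.SeparableSpace D ∧ C ≤ D ∧
      IsHereditaryIn (D ⊓ B) D ∧ IsFullIn (D ⊓ B) D :=
  stmt2_general A B C hBher hBfull hCsep

end
end
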